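/- Let n ≥ 2 and b > 0. For all t > 0, x > 0, and λ ≥ 0, with p(t,x,y) = ( b/(2 sinh(bt)) ) (y/x)^{n/4 − 1/2} exp( −b(x+y)/(2 tanh(bt)) ) I_{(n−2)/2}( b√(xy)/sinh(bt) ), one has ∫_0^∞ e^{−λ y} p(t,x,y) dy = exp( −(xb/2) (1 + 2λ b^{−1} coth(bt)) / (coth(bt) + 2λ b^{−1}) ) / ( cosh(bt) + 2λ b^{−1} sinh(bt) )^{n/2}. -/

import Mathlib

/-!
Expanding `I_ν` in its power series turns `e^{-μy} (y/x)^{ν/2} I_ν(2α√(xy))` into a series of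
nonnegative Gamma integrands `y^{k+ν} e^{-μy}`, so it may be integrated termwise. The `k`-th
integral `Γ(k+ν+1)/μ^{k+ν+1}` cancels the Gamma factor of the Bessel coefficient, and what is
left sums to `α^ν μ^{-ν-1} exp(α²x/μ)`. With `α = b/(2 sinh bt)` and `μ = λ + b coth(bt)/2`,
the identity `cosh² - sinh² = 1` puts this in the stated form.
-/

open Real MeasureTheory

/-- The modified Bessel function of the first kind,
`I_ν(z) = ∑_{k=0}^∞ (z/2)^{2k+ν} / (k! Γ(k+ν+1))`. -/
noncomputable def besselI (ν z : ℝ) : ℝ :=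
  ∑' k : ℕ, (z / 2) ^ (2 * (k : ℝ) + ν) / ((Nat.factorial k : ℝ) * Real.Gamma ((k : ℝ) + ν + 1))

open Set
open scoped Nat

section LaplaceBessel

variable {ν a μ : ℝ}

lemma rpow_mul_besselI_term_sqrt (ha : 0 ≤ a) {y : ℝ} (hy : 0 < y) (k : ℕ) :
    y ^ (ν / 2) * ((a * √y / 2) ^ (2 * (k : ℝ) + ν) / (k ! * Gamma (k + ν + 1)))
      = (a / 2) ^ (2 * (k : ℝ) + ν) / (k ! * Gamma (k + ν + 1)) * y ^ ((k : ℝ) + ν) := by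
  have hsplit : (a * √y / 2) ^ (2 * (k : ℝ) + ν) = (a / 2) ^ (2 * (k : ℝ) + ν) * y ^ (k + ν / 2) := by
    rw [mul_div_right_comm, mul_rpow (by positivity) (sqrt_nonneg y), sqrt_eq_rpow,
      ← rpow_mul hy.le]
    ring_nf
  have hpow : y ^ (ν / 2) * y ^ ((k : ℝ) + ν / 2) = y ^ ((k : ℝ) + ν) := by
    rw [← rpow_add hy]
    ring_nf
  rw [hsplit, ← hpow]
  ring

lemma integral_rpow_mul_exp_neg_mul_Ioi_eq_Gamma_div {s : ℝ} (hs : -1 < s) (hμ : 0 < μ) :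
    ∫ y in Ioi 0, y ^ s * exp (-(μ * y)) = Gamma (s + 1) / μ ^ (s + 1) := by
  have := integral_rpow_mul_exp_neg_mul_Ioi (a := s + 1) (by linarith) hμ
  rw [add_sub_cancel_right] at this
  rw [this, div_rpow zero_le_one hμ.le, one_rpow]
  ring

lemma integrableOn_rpow_mul_exp_neg_mul_Ioi {s : ℝ} (hs : -1 < s) (hμ : 0 < μ) :
    IntegrableOn (fun y : ℝ ↦ y ^ s * exp (-(μ * y))) (Ioi 0) := by
  simpa only [rpow_one, neg_mul] using integrableOn_rpow_mul_exp_neg_mul_rpow hs one_pos hμ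

lemma integral_besselI_coeff_mul_rpow_mul_exp_neg_mul (hν : -1 < ν) (ha : 0 < a) (hμ : 0 < μ) (k : ℕ) :
    ∫ y in Ioi 0, (a / 2) ^ (2 * (k : ℝ) + ν) / (k ! * Gamma (k + ν + 1))
        * (y ^ ((k : ℝ) + ν) * exp (-(μ * y)))
      = (a / 2) ^ ν / μ ^ (ν + 1) * (((a / 2) ^ 2 / μ) ^ k / k !) := by
  have hs : -1 < (k : ℝ) + ν := by linarith [k.cast_nonneg (α := ℝ)]
  have hΓ : 0 < Gamma (k + ν + 1) := Gamma_pos_of_pos (by linarith)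
  have ha2 : 0 < a / 2 := by positivity
  have hnum : (a / 2) ^ (2 * (k : ℝ) + ν) = ((a / 2) ^ 2) ^ k * (a / 2) ^ ν := by
    rw [rpow_add ha2, rpow_mul ha2.le, rpow_two, rpow_natCast]
  have hden : μ ^ ((k : ℝ) + ν + 1) = μ ^ k * μ ^ (ν + 1) := by
    rw [add_assoc, rpow_add hμ, rpow_natCast]
  rw [integral_const_mul, integral_rpow_mul_exp_neg_mul_Ioi_eq_Gamma_div hs hμ, hnum, hden,
    div_pow ((a / 2) ^ 2)]
  field_simp

theorem integral_exp_mul_rpow_mul_besselI_sqrt (hν : -1 < ν) (ha : 0 < a) (hμ : 0 < μ) :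
    ∫ y in Ioi 0, exp (-(μ * y)) * (y ^ (ν / 2) * besselI ν (a * √y))
      = (a / 2) ^ ν / μ ^ (ν + 1) * exp ((a / 2) ^ 2 / μ) := by
  set F : ℕ → ℝ → ℝ := fun k y ↦ (a / 2) ^ (2 * (k : ℝ) + ν) / (k ! * Gamma (k + ν + 1))
    * (y ^ ((k : ℝ) + ν) * exp (-(μ * y)))
  have hs (k : ℕ) : -1 < (k : ℝ) + ν := by linarith [k.cast_nonneg (α := ℝ)]
  have hF_nonneg (k : ℕ) {y : ℝ} (hy : y ∈ Ioi 0) : 0 ≤ F k y := by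
    have : 0 < Gamma (k + ν + 1) := Gamma_pos_of_pos (by linarith [hs k])
    have : 0 < y := hy
    positivity
  have hF_int (k : ℕ) : IntegrableOn (F k) (Ioi 0) :=
    (integrableOn_rpow_mul_exp_neg_mul_Ioi (hs k) hμ).const_mul _
  have hF_norm (k : ℕ) : ∫ y in Ioi 0, ‖F k y‖ = ∫ y in Ioi 0, F k y :=
    setIntegral_congr_fun measurableSet_Ioi fun y hy ↦ norm_of_nonneg (hF_nonneg k hy)
  have hseries : HasSum (fun k ↦ ∫ y in Ioi 0, F k y) (∫ y in Ioi 0, ∑' k, F k y) := by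
    refine hasSum_integral_of_summable_integral_norm hF_int ?_
    simp_rw [hF_norm, F, integral_besselI_coeff_mul_rpow_mul_exp_neg_mul hν ha hμ]
    exact (Real.summable_pow_div_factorial _).mul_left _
  have hexp : HasSum (fun k : ℕ ↦ ((a / 2) ^ 2 / μ) ^ k / k !) (exp ((a / 2) ^ 2 / μ)) := by
    rw [exp_eq_exp_ℝ]
    exact NormedSpace.expSeries_div_hasSum_exp _
  have hpointwise : EqOn (fun y ↦ exp (-(μ * y)) * (y ^ (ν / 2) * besselI ν (a * √y)))
      (fun y ↦ ∑' k, F k y) (Ioi 0) := by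
    intro y hy
    simp only [besselI, F, ← tsum_mul_left, rpow_mul_besselI_term_sqrt ha.le hy]
    exact tsum_congr fun k ↦ by ring
  rw [setIntegral_congr_fun measurableSet_Ioi hpointwise]
  simp_rw [F, integral_besselI_coeff_mul_rpow_mul_exp_neg_mul hν ha hμ] at hseries
  exact hseries.unique (hexp.mul_left _)

theorem integral_exp_mul_rpow_div_mul_besselI_sqrt_mul {ν α μ x : ℝ} (hν : -1 < ν) (hα : 0 < α)
    (hμ : 0 < μ) (hx : 0 < x) :
    ∫ y in Ioi 0, exp (-(μ * y)) * ((y / x) ^ (ν / 2) * besselI ν (2 * α * √(x * y)))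
      = α ^ ν / μ ^ (ν + 1) * exp (α ^ 2 * x / μ) := by
  have hkernel : EqOn (fun y ↦ exp (-(μ * y)) * ((y / x) ^ (ν / 2) * besselI ν (2 * α * √(x * y))))
      (fun y ↦ (x ^ (ν / 2))⁻¹ * (exp (-(μ * y)) * (y ^ (ν / 2) * besselI ν (2 * α * √x * √y))))
      (Ioi 0) := fun y hy ↦ by
    dsimp only
    rw [div_rpow (le_of_lt hy) hx.le, sqrt_mul hx.le, ← mul_assoc (2 * α)]
    ring
  have hhalf : 2 * α * √x / 2 = α * √x := by ring
  rw [setIntegral_congr_fun measurableSet_Ioi hkernel, integral_const_mul,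
    integral_exp_mul_rpow_mul_besselI_sqrt hν (by positivity) hμ, hhalf,
    mul_pow, sq_sqrt hx.le, mul_rpow hα.le (sqrt_nonneg x), sqrt_eq_rpow, ← rpow_mul hx.le,
    one_div_mul_eq_div]
  field_simp

end LaplaceBessel

section Hyperbolic

variable {b τ lam : ℝ}

lemma cosh_add_mul_sinh_eq_div (hb : b ≠ 0) (hτ : sinh τ ≠ 0) :
    cosh τ + 2 * lam * b⁻¹ * sinh τ = (lam + b * cosh τ / (2 * sinh τ)) / (b / (2 * sinh τ)) := by
  field_simp
  ring

lemma neg_mul_add_sq_mul_div_eq_coth (hb : 0 < b) (hτ : 0 < τ) (hlam : 0 ≤ lam) (x : ℝ) :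
    -(b * cosh τ / (2 * sinh τ) * x) + (b / (2 * sinh τ)) ^ 2 * x / (lam + b * cosh τ / (2 * sinh τ))
      = -(x * b / 2) * (1 + 2 * lam * b⁻¹ * (cosh τ / sinh τ)) / (cosh τ / sinh τ + 2 * lam * b⁻¹) := by
  have hS : 0 < sinh τ := sinh_pos_iff.2 hτ
  field_simp
  linear_combination (-(cosh τ * b ^ 2) - 2 * sinh τ * lam * b) * x * cosh_sq_sub_sinh_sq τ

end Hyperbolic

/-- Corollary 5.6: the Laplace transform of the fundamental solution (5.11)
of `u_t = 2x u_xx + n u_x - (b²/2) u`, i.e. the expectation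
`E_x(exp(-λX_t - (b²/2)∫_0^t X_s ds))` for the squared Bessel process. -/
theorem stmt_15 (n b t x lam : ℝ) (hn : 2 ≤ n) (hb : 0 < b)
    (ht : 0 < t) (hx : 0 < x) (hlam : 0 ≤ lam)
    (p : ℝ → ℝ)
    (hp : ∀ y, p y = (b / (2 * Real.sinh (b * t))) * (y / x) ^ (n / 4 - 1 / 2)
        * Real.exp (-b * (x + y) / (2 * Real.tanh (b * t)))
        * besselI ((n - 2) / 2) (b * Real.sqrt (x * y) / Real.sinh (b * t))) :
    (∫ y in Set.Ioi (0 : ℝ), Real.exp (-lam * y) * p y)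
      = Real.exp (-(x * b / 2)
            * (1 + 2 * lam * b⁻¹ * (Real.cosh (b * t) / Real.sinh (b * t)))
            / (Real.cosh (b * t) / Real.sinh (b * t) + 2 * lam * b⁻¹))
        / (Real.cosh (b * t) + 2 * lam * b⁻¹ * Real.sinh (b * t)) ^ (n / 2) := by
  have hbt : 0 < b * t := by positivity
  have hS : 0 < sinh (b * t) := sinh_pos_iff.2 hbt
  set ν := (n - 2) / 2 with hν_def
  set α := b / (2 * sinh (b * t)) with hα_def
  set β := b * cosh (b * t) / (2 * sinh (b * t)) with hβ_def
  set μ := lam + β with hμ_def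
  have hν : -1 < ν := by linarith
  have hα : 0 < α := by positivity
  have hμ : 0 < μ := by positivity
  have hintegrand : EqOn (fun y ↦ exp (-lam * y) * p y) (fun y ↦ α * exp (-(β * x))
      * (exp (-(μ * y)) * ((y / x) ^ (ν / 2) * besselI ν (2 * α * √(x * y))))) (Ioi 0) :=
    fun y _ ↦ by
      have hexp : exp (-lam * y) * exp (-b * (x + y) / (2 * tanh (b * t)))
          = exp (-(β * x)) * exp (-(μ * y)) := by
        rw [← exp_add, ← exp_add, hμ_def, hβ_def, tanh_eq_sinh_div_cosh]
        congr 1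
        field_simp
        ring
      have harg : b * √(x * y) / sinh (b * t) = 2 * α * √(x * y) := by
        rw [hα_def]
        field_simp
      dsimp only
      rw [hp y, show n / 4 - 1 / 2 = ν / 2 by ring, harg]
      linear_combination α * ((y / x) ^ (ν / 2) * besselI ν (2 * α * √(x * y))) * hexp
  have hbase : cosh (b * t) + 2 * lam * b⁻¹ * sinh (b * t) = μ / α :=
    cosh_add_mul_sinh_eq_div hb.ne' hS.ne'
  have hexponent : -(β * x) + α ^ 2 * x / μ = -(x * b / 2)
      * (1 + 2 * lam * b⁻¹ * (cosh (b * t) / sinh (b * t)))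
      / (cosh (b * t) / sinh (b * t) + 2 * lam * b⁻¹) :=
    neg_mul_add_sq_mul_div_eq_coth hb hbt hlam x
  rw [setIntegral_congr_fun measurableSet_Ioi hintegrand, integral_const_mul,
    integral_exp_mul_rpow_div_mul_besselI_sqrt_mul hν hα hμ hx, hbase, ← hexponent,
    show n / 2 = ν + 1 by ring, exp_add, div_rpow hμ.le hα.le, rpow_add_one hα.ne']
  field_simp
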